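/- Let P be a polynomial of degree m ≥ 1, M > 0, r > 0 with |P(z)| ≤ M for |z| < r. Suppose |z₀| ≤ r and |P(z₀)| ≥ ηM for some 0 < η ≤ 1. Then for all z with |z − z₀| ≤ ηr/(8m), one has (1/2)|P(z₀)| ≤ |P(z)| ≤ (3/2)|P(z₀)|. -/

import Mathlib

open Polynomial Metric Set

/-
On the disc `|z| ≤ r` we have `|P| ≤ M`; applying the maximum principle to the
reversed polynomial `w ↦ w^m P(1/w)` gives `|P(z)| ≤ M (|z|/r)^m` for `|z| ≥ r`, hence
`|P| ≤ (1 + 1/m)^m M ≤ e M` on `|z| ≤ r (1 + 1/m)`. So `P` maps the disc of radius `r/m` about `z₀`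
into the disc of radius `(e + 1) M ≤ 4M` about `P(z₀)`, and the Schwarz lemma gives
`|P(z) - P(z₀)| ≤ 4mM |z - z₀| / r ≤ ηM/2 ≤ |P(z₀)|/2` for `|z - z₀| ≤ ηr/(8m)`.
-/

theorem norm_le_of_forall_mem_ball_norm_le {E F : Type*} [NormedAddCommGroup E]
    [NormedSpace ℝ E] [NormedAddCommGroup F] {f : E → F} (hf : Continuous f) {c : E} {r : ℝ}
    (hr : r ≠ 0) {M : ℝ} (hM : ∀ z ∈ ball c r, ‖f z‖ ≤ M) :
    ∀ z ∈ closedBall c r, ‖f z‖ ≤ M := by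
  rw [← closure_ball c hr]
  exact closure_minimal hM (isClosed_le hf.norm continuous_const)

namespace Polynomial

theorem eval_inv_reflect_mul_pow {K : Type*} [Field K] {P : K[X]} {m : ℕ}
    (hm : P.natDegree ≤ m) {z : K} (hz : z ≠ 0) :
    (reflect m P).eval z⁻¹ * z ^ m = P.eval z := by
  let := invertibleOfNonzero hz
  simpa [invOf_eq_inv] using eval₂_reflect_mul_pow (RingHom.id K) z m P hm

theorem norm_eval_le_mul_div_pow {P : ℂ[X]} {m : ℕ} (hm : P.natDegree ≤ m) {M r : ℝ}
    (hr : 0 < r) (hP : ∀ z ∈ closedBall (0 : ℂ) r, ‖P.eval z‖ ≤ M) {z : ℂ} (hz : r ≤ ‖z‖) :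
    ‖P.eval z‖ ≤ M * (‖z‖ / r) ^ m := by
  have hz0 : z ≠ 0 := norm_pos_iff.mp (hr.trans_le hz)
  have hrev : ∀ w ∈ closedBall (0 : ℂ) r⁻¹, ‖(reflect m P).eval w‖ ≤ M / r ^ m := by
    rw [← closure_ball _ (inv_ne_zero hr.ne')]
    refine fun _ ↦ Complex.norm_le_of_forall_mem_frontier_norm_le isBounded_ball
      (reflect m P).differentiable.diffContOnCl fun w hw ↦ ?_
    rw [frontier_ball _ (inv_ne_zero hr.ne'), mem_sphere_zero_iff_norm] at hw
    have hw0 : w ≠ 0 := norm_pos_iff.mp (hw ▸ inv_pos.mpr hr)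
    have h := congrArg norm (eval_inv_reflect_mul_pow hm (inv_ne_zero hw0))
    rw [inv_inv, norm_mul, norm_pow, norm_inv, hw, inv_inv] at h
    have hPw := hP w⁻¹ (by rw [mem_closedBall_zero_iff, norm_inv, hw, inv_inv])
    rwa [← h, ← le_div_iff₀ (by positivity)] at hPw
  have h := hrev z⁻¹ (by rw [mem_closedBall_zero_iff, norm_inv]; exact inv_anti₀ hr hz)
  rw [← eval_inv_reflect_mul_pow hm hz0, norm_mul, norm_pow, div_pow]
  calc ‖(reflect m P).eval z⁻¹‖ * ‖z‖ ^ m ≤ M / r ^ m * ‖z‖ ^ m := by gcongr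
    _ = M * (‖z‖ ^ m / r ^ m) := by ring

theorem norm_eval_le_exp_one_mul {P : ℂ[X]} {m : ℕ} (hm : P.natDegree ≤ m) {M r : ℝ}
    (hr : 0 < r) (hP : ∀ z ∈ closedBall (0 : ℂ) r, ‖P.eval z‖ ≤ M) {z : ℂ}
    (hz : ‖z‖ ≤ r * (1 + (m : ℝ)⁻¹)) : ‖P.eval z‖ ≤ Real.exp 1 * M := by
  have hM : 0 ≤ M := (norm_nonneg _).trans (hP 0 (mem_closedBall_self hr.le))
  rcases le_total ‖z‖ r with hzr | hrz
  · calc ‖P.eval z‖ ≤ M := hP z (mem_closedBall_zero_iff.mpr hzr)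
      _ ≤ Real.exp 1 * M := le_mul_of_one_le_left hM (Real.one_le_exp zero_le_one)
  calc ‖P.eval z‖ ≤ M * (‖z‖ / r) ^ m := norm_eval_le_mul_div_pow hm hr hP hrz
    _ ≤ M * (1 + (m : ℝ)⁻¹) ^ m := by gcongr; rwa [div_le_iff₀' hr]
    _ ≤ M * Real.exp 1 := by gcongr; exact Real.one_add_inv_pow_le_exp
    _ = Real.exp 1 * M := mul_comm _ _

theorem mapsTo_ball_closedBall_eval {P : ℂ[X]} {m : ℕ} (hm : P.natDegree ≤ m) {M r : ℝ}
    (hr : 0 < r) (hP : ∀ z ∈ closedBall (0 : ℂ) r, ‖P.eval z‖ ≤ M) {z₀ : ℂ} (hz₀ : ‖z₀‖ ≤ r) :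
    MapsTo P.eval (ball z₀ (r / m)) (closedBall (P.eval z₀) (4 * M)) := by
  intro w hw
  rw [mem_ball_iff_norm] at hw
  have hw_norm : ‖w‖ ≤ r * (1 + (m : ℝ)⁻¹) := by
    have := norm_le_norm_add_norm_sub' w z₀
    rw [mul_add, mul_one, ← div_eq_mul_inv]
    linarith
  have hM : 0 ≤ M := (norm_nonneg _).trans (hP 0 (mem_closedBall_self hr.le))
  have hPw := norm_eval_le_exp_one_mul hm hr hP hw_norm
  have hPz₀ := hP z₀ (mem_closedBall_zero_iff.mpr hz₀)
  rw [mem_closedBall, dist_eq_norm]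
  calc ‖P.eval w - P.eval z₀‖ ≤ ‖P.eval w‖ + ‖P.eval z₀‖ := norm_sub_le _ _
    _ ≤ 3 * M + M := by gcongr; nlinarith [Real.exp_one_lt_three]
    _ = 4 * M := by ring

end Polynomial

theorem poly_local_stability_general (P : Polynomial ℂ) (m : ℕ) (hm : P.natDegree = m)
    (h1 : 1 ≤ m) (M r η : ℝ) (hr : 0 < r) (hη1 : η ≤ 1)
    (hP : ∀ z : ℂ, ‖z‖ < r → ‖P.eval z‖ ≤ M)
    (z₀ : ℂ) (hz₀ : ‖z₀‖ ≤ r) (hPz₀ : η * M ≤ ‖P.eval z₀‖) :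
    ∀ z : ℂ, ‖z - z₀‖ ≤ η * r / (8 * m) →
      (1 / 2) * ‖P.eval z₀‖ ≤ ‖P.eval z‖ ∧ ‖P.eval z‖ ≤ (3 / 2) * ‖P.eval z₀‖ := by
  intro z hz
  have hm0 : (0 : ℝ) < m := by exact_mod_cast h1
  have hdisc : ∀ w ∈ closedBall (0 : ℂ) r, ‖P.eval w‖ ≤ M :=
    norm_le_of_forall_mem_ball_norm_le P.continuous hr.ne' fun w hw ↦ hP w (mem_ball_zero_iff.mp hw)
  have hM : 0 ≤ M := (norm_nonneg _).trans (hdisc z₀ (mem_closedBall_zero_iff.mpr hz₀))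
  have hz_mem : z ∈ ball z₀ (r / m) := by
    rw [mem_ball_iff_norm]
    refine hz.trans_lt ((div_lt_div_iff₀ (by positivity) hm0).mpr ?_)
    nlinarith [mul_pos hr hm0]
  have hclose : ‖P.eval z - P.eval z₀‖ ≤ (1 / 2) * ‖P.eval z₀‖ := by
    rw [← dist_eq_norm]
    calc dist (P.eval z) (P.eval z₀) ≤ 4 * M / (r / m) * dist z z₀ :=
          Complex.dist_le_div_mul_dist_of_mapsTo_ball P.differentiable.differentiableOn
            (Polynomial.mapsTo_ball_closedBall_eval hm.le hr hdisc hz₀) hz_mem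
      _ ≤ 4 * M / (r / m) * (η * r / (8 * m)) := by rw [dist_eq_norm]; gcongr
      _ = (1 / 2) * (η * M) := by field_simp; ring
      _ ≤ (1 / 2) * ‖P.eval z₀‖ := by gcongr
  have := abs_le.mp (abs_norm_sub_norm_le (P.eval z) (P.eval z₀))
  constructor <;> linarith

/-- Local stability of a polynomial near a point where it is large: if `deg P = m ≥ 1`,
`|P(z)| ≤ M` for `|z| < r`, `|z₀| ≤ r` and `|P(z₀)| ≥ ηM` with `0 < η ≤ 1`, then
`(1/2)|P(z₀)| ≤ |P(z)| ≤ (3/2)|P(z₀)|` for `|z - z₀| ≤ ηr/(8m)`. -/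
theorem poly_local_stability (P : Polynomial ℂ) (m : ℕ) (hm : P.natDegree = m)
    (h1 : 1 ≤ m) (M r η : ℝ) (hM : 0 < M) (hr : 0 < r) (hη0 : 0 < η) (hη1 : η ≤ 1)
    (hP : ∀ z : ℂ, ‖z‖ < r → ‖P.eval z‖ ≤ M)
    (z₀ : ℂ) (hz₀ : ‖z₀‖ ≤ r) (hPz₀ : η * M ≤ ‖P.eval z₀‖) :
    ∀ z : ℂ, ‖z - z₀‖ ≤ η * r / (8 * m) →
      (1 / 2) * ‖P.eval z₀‖ ≤ ‖P.eval z‖ ∧ ‖P.eval z‖ ≤ (3 / 2) * ‖P.eval z₀‖ :=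
  poly_local_stability_general P m hm h1 M r η hr hη1 hP z₀ hz₀ hPz₀
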